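/- Let g be a finite-dimensional complex Lie algebra with property F: every basis contains a triple (x₁,x₂,x₃) such that for all i ≠ j in {1,2,3}, [xᵢ,[xᵢ,xⱼ]] ≠ 0 or [xⱼ,[xⱼ,xᵢ]] ≠ 0. Then g admits no periodic prederivation. -/

import Mathlib

/-!
A periodic endomorphism `P` of a finite-dimensional complex space is diagonalizable with
eigenvalues on the unit circle. For eigenvectors `x`, `y` with eigenvalues `α`, `β`, the
prederivation identity makes `⁅x, ⁅x, y⁆⁆` an eigenvector for `2α + β` unless it vanishes, and
`|α| = |β| = |2α + β| = 1` forces `β = -α`. Property F applied to an eigenbasis yields three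
eigenvalues of modulus one that are pairwise negatives of each other, which is impossible.
-/

/-- A prederivation of a Lie algebra. -/
def IsPrederivation {L : Type*} [LieRing L] [LieAlgebra ℂ L] (P : L →ₗ[ℂ] L) : Prop :=
  ∀ x y z : L, P ⁅x, ⁅y, z⁆⁆ = ⁅P x, ⁅y, z⁆⁆ + ⁅x, ⁅P y, z⁆⁆ + ⁅x, ⁅y, P z⁆⁆

theorem eq_neg_of_norm_eq_of_norm_two_smul_add_eq {F : Type*} [NormedAddCommGroup F]
    [InnerProductSpace ℝ F] {x y : F} (hxy : ‖x‖ = ‖y‖) (h : ‖(2 : ℝ) • x + y‖ = ‖x‖) :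
    y = -x := by
  have hinner : inner ℝ x y = -‖x‖ ^ 2 := by
    have h2 := norm_add_sq_real ((2 : ℝ) • x) y
    rw [h, norm_smul, real_inner_smul_left, ← hxy, Real.norm_two] at h2
    linarith
  have hsum : ‖x + y‖ ^ 2 = 0 := by
    rw [norm_add_sq_real, hinner, ← hxy]
    ring
  rw [eq_neg_iff_add_eq_zero, add_comm, ← norm_eq_zero]
  exact pow_eq_zero_iff two_ne_zero |>.mp hsum

universe u

namespace Module.End

variable {K : Type u} {V : Type*} [Field K] [AddCommGroup V] [Module K V] {f : End K V} {m : ℕ}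

theorem isSemisimple_of_pow_eq_one [CharZero K] (hm : m ≠ 0) (hf : f ^ m = 1) :
    f.IsSemisimple := by
  refine isSemisimple_of_squarefree_aeval_eq_zero ?_ (p := Polynomial.X ^ m - Polynomial.C 1)
    (by simp [hf])
  exact (Polynomial.separable_X_pow_sub_C (1 : K) (Nat.cast_ne_zero.mpr hm) one_ne_zero).squarefree

theorem HasEigenvector.pow_eq_one_of_pow_eq_one {μ : K} {v : V} (hv : f.HasEigenvector μ v)
    (hf : f ^ m = 1) : μ ^ m = 1 := by
  have hfix : μ ^ m • v = (1 : K) • v := by rw [← hv.pow_apply, hf, one_smul, one_apply]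
  exact smul_left_injective K hv.2 hfix

theorem IsSemisimple.exists_basis_hasEigenvector [IsAlgClosed K] [FiniteDimensional K V]
    (hf : f.IsSemisimple) :
    ∃ (ι : Type u) (b : Basis ι K V) (μ : ι → K), ∀ i, f.HasEigenvector (μ i) (b i) := by
  classical
  have hint : DirectSum.IsInternal fun μ : K => f.eigenspace μ :=
    DirectSum.isInternal_submodule_of_iSupIndep_of_iSup_eq_top f.eigenspaces_iSupIndep
      hf.iSup_eigenspace_eq_top
  let b := hint.collectedBasis fun μ => Module.finBasis K (f.eigenspace μ)
  exact ⟨_, b, Sigma.fst, fun i => ⟨hint.collectedBasis_mem _ i, b.ne_zero i⟩⟩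

end Module.End

theorem Module.End.HasEigenvector.norm_eq_one_of_pow_eq_one {V : Type*} [AddCommGroup V]
    [Module ℂ V] {f : End ℂ V} {m : ℕ} {μ : ℂ} {v : V} (hv : f.HasEigenvector μ v) (hm : m ≠ 0)
    (hf : f ^ m = 1) : ‖μ‖ = 1 :=
  Complex.norm_eq_one_of_pow_eq_one (hv.pow_eq_one_of_pow_eq_one hf) hm

namespace IsPrederivation

open Module.End

variable {L : Type*} [LieRing L] [LieAlgebra ℂ L] {P : L →ₗ[ℂ] L} {x y z : L} {α β γ : ℂ}

theorem apply_lie_lie_of_apply_eq_smul (hP : IsPrederivation P) (hx : P x = α • x)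
    (hy : P y = β • y) (hz : P z = γ • z) : P ⁅x, ⁅y, z⁆⁆ = (α + β + γ) • ⁅x, ⁅y, z⁆⁆ := by
  rw [hP, hx, hy, hz]
  simp only [smul_lie, lie_smul, add_smul]

theorem hasEigenvector_lie_lie (hP : IsPrederivation P) (hx : HasEigenvector P α x)
    (hy : HasEigenvector P β y) (hz : HasEigenvector P γ z) (h : ⁅x, ⁅y, z⁆⁆ ≠ 0) :
    HasEigenvector P (α + β + γ) ⁅x, ⁅y, z⁆⁆ :=
  ⟨mem_eigenspace_iff.mpr <| hP.apply_lie_lie_of_apply_eq_smul hx.apply_eq_smul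
    hy.apply_eq_smul hz.apply_eq_smul, h⟩

theorem eq_neg_of_lie_lie_ne_zero (hP : IsPrederivation P) {m : ℕ} (hm : m ≠ 0)
    (hPm : P ^ m = 1) (hx : HasEigenvector P α x) (hy : HasEigenvector P β y)
    (h : ⁅x, ⁅x, y⁆⁆ ≠ 0) : β = -α := by
  have hα := hx.norm_eq_one_of_pow_eq_one hm hPm
  have hβ := hy.norm_eq_one_of_pow_eq_one hm hPm
  have h2αβ := (hP.hasEigenvector_lie_lie hx hx hy h).norm_eq_one_of_pow_eq_one hm hPm
  refine eq_neg_of_norm_eq_of_norm_two_smul_add_eq (hα.trans hβ.symm) ?_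
  rw [two_smul, h2αβ, hα]

end IsPrederivation

theorem no_periodic_prederivation_of_propertyF (L : Type*) [LieRing L]
    [LieAlgebra ℂ L] [FiniteDimensional ℂ L]
    (hF : ∀ (ι : Type) (b : Module.Basis ι ℂ L), ∃ i j k : ι, i ≠ j ∧ i ≠ k ∧ j ≠ k ∧
      (⁅b i, ⁅b i, b j⁆⁆ ≠ 0 ∨ ⁅b j, ⁅b j, b i⁆⁆ ≠ 0) ∧
      (⁅b i, ⁅b i, b k⁆⁆ ≠ 0 ∨ ⁅b k, ⁅b k, b i⁆⁆ ≠ 0) ∧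
      (⁅b j, ⁅b j, b k⁆⁆ ≠ 0 ∨ ⁅b k, ⁅b k, b j⁆⁆ ≠ 0)) :
    ¬ ∃ P : L →ₗ[ℂ] L, IsPrederivation P ∧ ∃ m : ℕ, 1 ≤ m ∧ P ^ m = 1 := by
  rintro ⟨P, hP, m, hm1, hPm⟩
  have hm : m ≠ 0 := by omega
  obtain ⟨ι, b, μ, hb⟩ :=
    (Module.End.isSemisimple_of_pow_eq_one hm hPm).exists_basis_hasEigenvector
  have hneg : ∀ i j, (⁅b i, ⁅b i, b j⁆⁆ ≠ 0 ∨ ⁅b j, ⁅b j, b i⁆⁆ ≠ 0) → μ j = -μ i := by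
    rintro i j (h | h)
    · exact hP.eq_neg_of_lie_lie_ne_zero hm hPm (hb i) (hb j) h
    · exact neg_eq_iff_eq_neg.mp (hP.eq_neg_of_lie_lie_ne_zero hm hPm (hb j) (hb i) h).symm
  obtain ⟨i, j, k, -, -, -, hij, hik, hjk⟩ := hF ι b
  have hj : μ j = 0 := by
    linear_combination (hneg i j hij + hneg j k hjk - hneg i k hik) / 2
  simpa [hj] using (hb j).norm_eq_one_of_pow_eq_one hm hPm
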